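/- Let ∅ ≠ A ⊆ R̃^d be internal and sharply bounded, and let (A_ε)_ε be any sharply bounded representative of A. Then E_M(A) equals the set of nets (u_ε)_ε of smooth functions ℝ^d → ℂ such that for every multi-index α there exists N ∈ ℕ with sup_{x ∈ A_ε + ε^N} |∂^α u_ε(x)| ≤ ε^{-N} for all sufficiently small ε (where A + r denotes {x ∈ ℝ^d : d(x,A) ≤ r}). -/

import Mathlib

open Real Set Metric MeasureTheory Filter

noncomputable section

/-- `P ε` holds for all sufficiently small `ε ∈ (0,1)`. -/
def EvSmall (P : ℝ → Prop) : Prop :=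
  ∃ ε₀ : ℝ, 0 < ε₀ ∧ ε₀ < 1 ∧ ∀ ε : ℝ, 0 < ε → ε ≤ ε₀ → P ε

/-- A net `(u_ε)` with values in a seminormed group is moderate. -/
def Moderate {E : Type*} [SeminormedAddGroup E] (u : ℝ → E) : Prop :=
  ∃ N : ℕ, EvSmall fun ε => ‖u ε‖ ≤ ε ^ (-(N : ℝ))

/-- A net `(u_ε)` is negligible. -/
def Negligible {E : Type*} [SeminormedAddGroup E] (u : ℝ → E) : Prop :=
  ∀ m : ℕ, EvSmall fun ε => ‖u ε‖ ≤ ε ^ (m : ℝ)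

/-- Two nets represent the same generalized point. -/
def EqvNet {E : Type*} [SeminormedAddGroup E] (x y : ℝ → E) : Prop :=
  Negligible fun ε => x ε - y ε

/-- The set of generalized points of `Ẽ` (modelled as the moderate nets). -/
def GenPt (E : Type*) [SeminormedAddGroup E] : Set (ℝ → E) := {x | Moderate x}

/-- `x` is a representative of some generalized point belonging to `A`. -/
def IsReprOfPointOf {E : Type*} [SeminormedAddGroup E] (A : Set (ℝ → E)) (x : ℝ → E) : Prop :=
  Moderate x ∧ ∃ a ∈ A, EqvNet x a

/-- The sharp norm `e^{-v(x)}` of a (moderate) net. -/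
noncomputable def sharpNorm {E : Type*} [SeminormedAddGroup E] (x : ℝ → E) : ℝ :=
  sInf {r : ℝ | ∃ b : ℝ, r = Real.exp (-b) ∧ EvSmall fun ε => ‖x ε‖ ≤ ε ^ b}

/-- `A` is open for the sharp topology (as a set of generalized points). -/
def SharpOpen {E : Type*} [SeminormedAddGroup E] (A : Set (ℝ → E)) : Prop :=
  (∀ x ∈ A, Moderate x) ∧
  ∀ x ∈ A, ∃ r > 0, ∀ y : ℝ → E, Moderate y →
    sharpNorm (fun ε => y ε - x ε) < r → y ∈ A

/-- `B` is a sharp neighbourhood of `A`. -/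
def IsSharpNbhdOf {E : Type*} [SeminormedAddGroup E] (B A : Set (ℝ → E)) : Prop :=
  A ⊆ B ∧ ∀ x ∈ A, ∃ r > 0, ∀ y : ℝ → E, Moderate y →
    sharpNorm (fun ε => y ε - x ε) < r → y ∈ B

/-- The internal set with representative `(Aε)`. -/
def InternalSet {E : Type*} [SeminormedAddGroup E] (Aε : ℝ → Set E) : Set (ℝ → E) :=
  {x | Moderate x ∧ ∃ y : ℝ → E, EqvNet x y ∧ EvSmall fun ε => y ε ∈ Aε ε}

/-- `(Aε)` is a sharply bounded representative. -/
def SharplyBddRep {E : Type*} [SeminormedAddGroup E] (Aε : ℝ → Set E) : Prop :=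
  ∃ M : ℕ, EvSmall fun ε => ∀ x ∈ Aε ε, ‖x‖ ≤ ε ^ (-(M : ℝ))

/-- A set of generalized points is sharply bounded. -/
def SharplyBddSet {E : Type*} [SeminormedAddGroup E] (A : Set (ℝ → E)) : Prop :=
  ∃ C : ℝ, ∀ x ∈ A, sharpNorm x ≤ C

/-- The interleaved closure of a set of generalized points. -/
def interleaved {E : Type*} [SeminormedAddGroup E] (A : Set (ℝ → E)) : Set (ℝ → E) :=
  {x | ∃ (m : ℕ) (S : Fin m → Set ℝ) (y : Fin m → ℝ → E),
    (∀ ε ∈ Set.Ioo (0:ℝ) 1, ∃! j, ε ∈ S j) ∧ (∀ j, y j ∈ A) ∧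
    ∀ ε ∈ Set.Ioo (0:ℝ) 1, ∀ j, ε ∈ S j → x ε = y j ε}

/-- A net of smooth functions (smooth for each ε ∈ (0,1)). -/
def SmoothNet {V : Type*} [NormedAddCommGroup V] [NormedSpace ℝ V] (u : ℝ → V → ℂ) : Prop :=
  ∀ ε : ℝ, 0 < ε → ε < 1 → ContDiff ℝ (⊤ : ℕ∞) (u ε)

/-- The nets belonging to `E_M(A)` : all derivatives are moderate along the points of `A`. -/
def EMod {V : Type*} [NormedAddCommGroup V] [NormedSpace ℝ V]
    (A : Set (ℝ → V)) (u : ℝ → V → ℂ) : Prop :=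
  SmoothNet u ∧ ∀ (n : ℕ) (x : ℝ → V), IsReprOfPointOf A x →
    Moderate fun ε => iteratedFDeriv ℝ n (u ε) (x ε)

/-- The nets belonging to `N(A)` : all derivatives are negligible along the points of `A`. -/
def NNeg {V : Type*} [NormedAddCommGroup V] [NormedSpace ℝ V]
    (A : Set (ℝ → V)) (u : ℝ → V → ℂ) : Prop :=
  SmoothNet u ∧ ∀ (n : ℕ) (x : ℝ → V), IsReprOfPointOf A x →
    Negligible fun ε => iteratedFDeriv ℝ n (u ε) (x ε)

/-- `u` and `v` define the same element of `G̃(A)`. -/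
def GEq {V : Type*} [NormedAddCommGroup V] [NormedSpace ℝ V]
    (A : Set (ℝ → V)) (u v : ℝ → V → ℂ) : Prop :=
  NNeg A fun ε z => u ε z - v ε z

/-- `x̃ ≤ ỹ` in `R̃` (for the given representatives). -/
def RleNet (x y : ℝ → ℝ) : Prop := ∀ m : ℕ, EvSmall fun ε => x ε ≤ y ε + ε ^ (m : ℝ)

/-- `x̃ ≫ 0` in `R̃`. -/
def StrPosNet (x : ℝ → ℝ) : Prop := ∃ m : ℕ, EvSmall fun ε => ε ^ (m : ℝ) ≤ x ε

/-- `x̃ ≪ ỹ` in `R̃`. -/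
def RltlNet (x y : ℝ → ℝ) : Prop := StrPosNet fun ε => y ε - x ε

/-- The operator `∂̄ = ½(∂ₓ + i ∂_y)` on smooth functions `ℂ → ℂ`. -/
def dbar (u : ℂ → ℂ) (z : ℂ) : ℂ :=
  (fderiv ℝ u z 1 + Complex.I * fderiv ℝ u z Complex.I) / 2

/-- The iterated derivative `D^k u = ∂ₓ^k u`. -/
def Dpow : ℕ → (ℂ → ℂ) → ℂ → ℂ
  | 0, u => u
  | (k+1), u => Dpow k fun z => fderiv ℝ u z 1

/-- `u ∈ G̃_H(A)` : generalized holomorphic functions on `A ⊆ C̃`. -/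
def GHol (A : Set (ℝ → ℂ)) (u : ℝ → ℂ → ℂ) : Prop :=
  EMod A u ∧ NNeg A fun ε => dbar (u ε)

/-- A continuous, piecewise `C¹` function on `[0,1]` (with its partition). -/
structure PwC1Path where
  toFun : ℝ → ℂ
  n : ℕ
  pt : Fin (n + 1) → ℝ
  mono : Monotone pt
  first : pt 0 = 0
  last : pt (Fin.last n) = 1
  cont : ContinuousOn toFun (Set.Icc 0 1)
  piece : ∀ i : Fin n, ContDiffOn ℝ 1 toFun (Set.Icc (pt i.castSucc) (pt i.succ))

/-- A net of piecewise `C¹` paths which is moderate for the `C¹_pw` norm. -/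
def PathModerate (γ : ℝ → PwC1Path) : Prop :=
  (∃ N : ℕ, EvSmall fun ε => ∀ t ∈ Set.Icc (0:ℝ) 1, ‖(γ ε).toFun t‖ ≤ ε ^ (-(N:ℝ))) ∧
  (∃ N : ℕ, EvSmall fun ε => ∀ᵐ t ∂(volume.restrict (Set.Icc (0:ℝ) 1)),
      ‖deriv (γ ε).toFun t‖ ≤ ε ^ (-(N:ℝ)))

/-- Two nets of paths represent the same generalized path
(their difference is negligible for the `C¹_pw` norm). -/
def PathEqv (γ γ' : ℝ → PwC1Path) : Prop :=
  ∀ m : ℕ, EvSmall fun ε =>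
    (∀ t ∈ Set.Icc (0:ℝ) 1, ‖(γ ε).toFun t - (γ' ε).toFun t‖ ≤ ε ^ (m:ℝ)) ∧
    (∀ᵐ t ∂(volume.restrict (Set.Icc (0:ℝ) 1)),
      ‖deriv (γ ε).toFun t - deriv (γ' ε).toFun t‖ ≤ ε ^ (m:ℝ))

/-- `γ` is a (generalized) path in `A ⊆ C̃`. -/
def PathIn (A : Set (ℝ → ℂ)) (γ : ℝ → PwC1Path) : Prop :=
  PathModerate γ ∧ ∀ t : ℝ → ℝ, (∀ ε, t ε ∈ Set.Icc (0:ℝ) 1) →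
    IsReprOfPointOf A fun ε => (γ ε).toFun (t ε)

/-- The complex path integral `∫_γ u(z) dz` along a piecewise `C¹` path. -/
noncomputable def pathIntegral (γ : PwC1Path) (u : ℂ → ℂ) : ℂ :=
  ∑ i : Fin γ.n, ∫ t in (γ.pt i.castSucc)..(γ.pt i.succ),
    u (γ.toFun t) * derivWithin γ.toFun (Set.Icc (γ.pt i.castSucc) (γ.pt i.succ)) t

/-- The path is closed: `γ(0) = γ(1)` as generalized points. -/
def ClosedPath (γ : ℝ → PwC1Path) : Prop :=
  Negligible fun ε => (γ ε).toFun 1 - (γ ε).toFun 0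

/-- A continuous, piecewise `C¹` function on `[0,1]²` (with its grid partition). -/
structure PwC1Homotopy where
  toFun : ℝ × ℝ → ℂ
  n : ℕ
  pt : Fin (n + 1) → ℝ
  mono : Monotone pt
  first : pt 0 = 0
  last : pt (Fin.last n) = 1
  cont : ContinuousOn toFun (Set.Icc 0 1 ×ˢ Set.Icc 0 1)
  piece : ∀ i j : Fin n, ContDiffOn ℝ 1 toFun
    (Set.Icc (pt i.castSucc) (pt i.succ) ×ˢ Set.Icc (pt j.castSucc) (pt j.succ))

/-- A moderate net of piecewise `C¹` functions on the square. -/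
def HomotopyModerate (H : ℝ → PwC1Homotopy) : Prop :=
  (∃ N : ℕ, EvSmall fun ε => ∀ p ∈ (Set.Icc (0:ℝ) 1 ×ˢ Set.Icc (0:ℝ) 1),
      ‖(H ε).toFun p‖ ≤ ε ^ (-(N:ℝ))) ∧
  (∃ N : ℕ, EvSmall fun ε =>
      ∀ᵐ p ∂(volume.restrict ((Set.Icc (0:ℝ) 1 ×ˢ Set.Icc (0:ℝ) 1) : Set (ℝ × ℝ))),
      ‖fderiv ℝ (H ε).toFun p‖ ≤ ε ^ (-(N:ℝ)))

/-- `H` is a homotopy in `A` between the closed paths `γ` and `γ'`. -/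
def IsHomotopyBetween (A : Set (ℝ → ℂ)) (γ γ' : ℝ → PwC1Path)
    (H : ℝ → PwC1Homotopy) : Prop :=
  HomotopyModerate H ∧
  (∀ t : ℝ → ℝ, (∀ ε, t ε ∈ Set.Icc (0:ℝ) 1) →
    (Negligible fun ε => (H ε).toFun (t ε, 0) - (γ ε).toFun (t ε)) ∧
    (Negligible fun ε => (H ε).toFun (t ε, 1) - (γ' ε).toFun (t ε))) ∧
  (∀ s : ℝ → ℝ, (∀ ε, s ε ∈ Set.Icc (0:ℝ) 1) →
    Negligible fun ε => (H ε).toFun (0, s ε) - (H ε).toFun (1, s ε)) ∧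
  (∀ t s : ℝ → ℝ, (∀ ε, t ε ∈ Set.Icc (0:ℝ) 1) → (∀ ε, s ε ∈ Set.Icc (0:ℝ) 1) →
    IsReprOfPointOf A fun ε => (H ε).toFun (t ε, s ε))


/-! The implication `←` holds because a representative of a point of `A` lies within `ε ^ N` of
`A_ε` for small `ε`. For `→`, if the bound fails at some order `n`, then for every `k` there are
arbitrarily small scales `ε` and points `x` within `ε ^ k` of some `y ∈ A_ε` with
`‖D^n u_ε(x)‖ > ε ^ (-k)`. Choosing such a scale `ε_k < 1/(k+1)` for each `k` and interleaving the
corresponding points (with a net in `A_ε` at all other scales) produces a representative of a point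
of `A` along which `D^n u_ε` is not moderate. -/

open Filter Topology

theorem evSmall_iff_eventually {P : ℝ → Prop} : EvSmall P ↔ ∀ᶠ ε in 𝓝[>] 0, P ε := by
  rw [Filter.Eventually, mem_nhdsGT_iff_exists_Ioo_subset]
  constructor
  · rintro ⟨ε₀, h0, -, hP⟩
    exact ⟨ε₀, h0, fun ε hε => hP ε hε.1 hε.2.le⟩
  · rintro ⟨c, hc, hP⟩
    have hc : (0 : ℝ) < c := hc
    refine ⟨min (c / 2) (1 / 2), by positivity, by linarith [min_le_right (c / 2) (1 / 2)],
      fun ε h0 hε => hP ⟨h0, ?_⟩⟩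
    linarith [min_le_left (c / 2) (1 / 2)]

theorem two_mul_rpow_add_one_le {ε : ℝ} (h0 : 0 < ε) (h : ε ≤ 1 / 2) (b : ℝ) :
    2 * ε ^ (b + 1) ≤ ε ^ b := by
  rw [Real.rpow_add_one h0.ne']
  nlinarith [Real.rpow_pos_of_pos h0 b]

section Nets

variable {E : Type*} [SeminormedAddGroup E]

theorem Negligible.add {u v : ℝ → E} (hu : Negligible u) (hv : Negligible v) :
    Negligible fun ε => u ε + v ε := by
  intro m
  refine evSmall_iff_eventually.2 ?_
  filter_upwards [evSmall_iff_eventually.1 (hu (m + 1)), evSmall_iff_eventually.1 (hv (m + 1)),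
    Ioo_mem_nhdsGT (by norm_num : (0 : ℝ) < 1 / 2)] with ε hu hv ⟨h0, h⟩
  push_cast at hu hv
  calc ‖u ε + v ε‖ ≤ ‖u ε‖ + ‖v ε‖ := norm_add_le _ _
    _ ≤ 2 * ε ^ ((m : ℝ) + 1) := by linarith
    _ ≤ ε ^ (m : ℝ) := two_mul_rpow_add_one_le h0 h.le _

theorem EqvNet.refl (x : ℝ → E) : EqvNet x x := fun _ =>
  evSmall_iff_eventually.2 <| eventually_mem_nhdsWithin.mono fun ε (h : 0 < ε) => by
    simpa only [sub_self, norm_zero] using (Real.rpow_pos_of_pos h _).le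

theorem EqvNet.trans {x y z : ℝ → E} (hxy : EqvNet x y) (hyz : EqvNet y z) : EqvNet x z := by
  simpa only [EqvNet, sub_add_sub_cancel] using hxy.add hyz

theorem Moderate.of_eqvNet {x y : ℝ → E} (hy : Moderate y) (hxy : EqvNet x y) : Moderate x := by
  obtain ⟨M, hM⟩ := hy
  refine ⟨M + 1, evSmall_iff_eventually.2 ?_⟩
  filter_upwards [evSmall_iff_eventually.1 hM, evSmall_iff_eventually.1 (hxy 0),
    Ioo_mem_nhdsGT (by norm_num : (0 : ℝ) < 1 / 2)] with ε hy hxy ⟨h0, h⟩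
  have h1 : (1 : ℝ) ≤ ε ^ (-(M : ℝ)) :=
    Real.one_le_rpow_of_pos_of_le_one_of_nonpos h0 (by linarith) (by simp)
  simp only [Nat.cast_zero, Real.rpow_zero] at hxy
  push_cast
  calc ‖x ε‖ ≤ ‖y ε‖ + ‖x ε - y ε‖ := norm_le_norm_add_norm_sub' _ _
    _ ≤ 2 * ε ^ (-((M : ℝ) + 1) + 1) := by rw [neg_add_rev, neg_add_cancel_comm]; linarith
    _ ≤ ε ^ (-((M : ℝ) + 1)) := two_mul_rpow_add_one_le h0 h.le _

theorem EqvNet.eventually_mem_cthickening {E : Type*} [SeminormedAddCommGroup E]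
    {x y : ℝ → E} {S : ℝ → Set E} (hxy : EqvNet x y) (hy : ∀ᶠ ε in 𝓝[>] 0, y ε ∈ S ε) (N : ℕ) :
    ∀ᶠ ε in 𝓝[>] 0, x ε ∈ cthickening (ε ^ (N : ℝ)) (S ε) := by
  filter_upwards [evSmall_iff_eventually.1 (hxy N), hy] with ε hxy hy
  exact mem_cthickening_of_dist_le (x ε) (y ε) _ _ hy (by rwa [dist_eq_norm_sub])

theorem SharplyBddRep.moderate {S : ℝ → Set E} (hS : SharplyBddRep S) {y : ℝ → E}
    (hy : ∀ᶠ ε in 𝓝[>] 0, y ε ∈ S ε) : Moderate y := by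
  obtain ⟨M, hM⟩ := hS
  exact ⟨M, evSmall_iff_eventually.2 <|
    ((evSmall_iff_eventually.1 hM).and hy).mono fun ε h => h.1 _ h.2⟩

theorem SharplyBddRep.mem_internalSet {S : ℝ → Set E} (hS : SharplyBddRep S) {y : ℝ → E}
    (hy : ∀ᶠ ε in 𝓝[>] 0, y ε ∈ S ε) : y ∈ InternalSet S :=
  ⟨hS.moderate hy, y, EqvNet.refl y, evSmall_iff_eventually.2 hy⟩

end Nets

theorem exists_diagonal_net {α : Type*} (Q : ℕ → ℝ → α → Prop)
    (hQ : ∀ k, ∃ᶠ ε in 𝓝[>] 0, ∃ a, Q k ε a) (b : ℝ → α) :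
    ∃ p : ℝ → α, (∀ m, ∀ᶠ ε in 𝓝[>] 0, p ε = b ε ∨ ∃ k ≥ m, Q k ε (p ε)) ∧
      ∀ m, ∃ᶠ ε in 𝓝[>] 0, ∃ k ≥ m, Q k ε (p ε) := by
  classical
  have hscale : ∀ k : ℕ, ∃ ε ∈ Set.Ioo (0 : ℝ) (1 / (k + 1)), ∃ a, Q k ε a := fun k =>
    ((hQ k).and_eventually (Ioo_mem_nhdsGT (by positivity))).exists.imp fun _ h => ⟨h.2, h.1⟩
  choose e he a ha using hscale
  have he_tendsto : Tendsto e atTop (𝓝[>] 0) :=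
    tendsto_nhdsWithin_iff.2 ⟨tendsto_of_tendsto_of_tendsto_of_le_of_le tendsto_const_nhds
      tendsto_one_div_add_atTop_nhds_zero_nat (fun k => (he k).1.le) (fun k => (he k).2.le),
      Eventually.of_forall fun k => (he k).1⟩
  -- the scales `e 0, …, e (m - 1)` are positive, so smaller scales carry indices `≥ m`
  have hlarge : ∀ m, ∀ᶠ ε in 𝓝[>] 0, ∀ k, e k = ε → m ≤ k := by
    intro m
    have hsmall : ∀ᶠ ε in 𝓝[>] (0 : ℝ), ∀ k ∈ Finset.range m, ε < e k :=
      (eventually_all_finset _).2 fun k _ =>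
        Eventually.mono (Ioo_mem_nhdsGT (he k).1) fun _ h => h.2
    filter_upwards [hsmall] with ε hε k hk
    by_contra hlt
    exact (hε k (Finset.mem_range.2 (not_le.1 hlt))).ne hk.symm
  let p : ℝ → α := fun ε => if h : ∃ k, e k = ε then a h.choose else b ε
  have hp : ∀ ε (h : ∃ k, e k = ε), Q h.choose ε (p ε) := fun ε h => by
    simpa only [p, dif_pos h, h.choose_spec] using ha h.choose
  refine ⟨p, fun m => ?_, fun m => ?_⟩
  · filter_upwards [hlarge m] with ε hε
    by_cases h : ∃ k, e k = ε
    · exact Or.inr ⟨_, hε _ h.choose_spec, hp ε h⟩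
    · exact Or.inl (dif_neg h)
  · refine he_tendsto.frequently (Eventually.frequently ?_)
    filter_upwards [he_tendsto.eventually (hlarge m)] with k hk
    have h : ∃ j, e j = e k := ⟨k, rfl⟩
    exact ⟨_, hk _ h.choose_spec, hp _ h⟩

theorem exists_eqvNet_not_moderate {E F : Type*} [SeminormedAddCommGroup E] [SeminormedAddGroup F]
    {S : ℝ → Set E} {f : ℝ → E → F} {b : ℝ → E} (hb : ∀ᶠ ε in 𝓝[>] 0, b ε ∈ S ε)
    (hf : ¬ ∃ N : ℕ, EvSmall fun ε =>
      ∀ x ∈ cthickening (ε ^ (N : ℝ)) (S ε), ‖f ε x‖ ≤ ε ^ (-(N : ℝ))) :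
    ∃ x y : ℝ → E, EqvNet x y ∧ (∀ᶠ ε in 𝓝[>] 0, y ε ∈ S ε) ∧
      ¬ Moderate fun ε => f ε (x ε) := by
  let Q : ℕ → ℝ → E × E → Prop := fun k ε p =>
    p.2 ∈ S ε ∧ dist p.1 p.2 < ε ^ (k : ℝ) ∧ ε ^ (-(k : ℝ)) < ‖f ε p.1‖
  have hQ : ∀ k, ∃ᶠ ε in 𝓝[>] 0, ∃ p, Q k ε p := by
    intro k
    have hfail := not_eventually.1 (mt evSmall_iff_eventually.2 (not_exists.1 hf (k + 1)))
    refine (hfail.and_eventually (Ioo_mem_nhdsGT one_pos)).mono ?_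
    rintro ε ⟨hfail, h0, h1⟩
    push Not at hfail
    obtain ⟨x, hx, hbig⟩ := hfail
    have hpow : ε ^ ((k + 1 : ℕ) : ℝ) < ε ^ (k : ℝ) :=
      Real.rpow_lt_rpow_of_exponent_gt h0 h1 (by push_cast; linarith)
    obtain ⟨y, hy, hxy⟩ := mem_thickening_iff.1
      (cthickening_subset_thickening' (Real.rpow_pos_of_pos h0 _) hpow _ hx)
    exact ⟨(x, y), hy, hxy, lt_of_le_of_lt
      (Real.rpow_le_rpow_of_exponent_ge h0 h1.le (by push_cast; linarith)) hbig⟩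
  obtain ⟨p, hp_ev, hp_freq⟩ := exists_diagonal_net Q hQ fun ε => (b ε, b ε)
  refine ⟨fun ε => (p ε).1, fun ε => (p ε).2, fun m => ?_, ?_, ?_⟩
  · refine evSmall_iff_eventually.2 ?_
    filter_upwards [hp_ev m, Ioo_mem_nhdsGT one_pos] with ε hε ⟨h0, h1⟩
    rcases hε with h | ⟨k, hk, -, hdist, -⟩
    · simpa [h] using (Real.rpow_pos_of_pos h0 (m : ℝ)).le
    · rw [← dist_eq_norm_sub]
      exact hdist.le.trans (Real.rpow_le_rpow_of_exponent_ge h0 h1.le (by exact_mod_cast hk))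
  · filter_upwards [hp_ev 0, hb] with ε hε hbε
    rcases hε with h | ⟨k, -, hQk⟩
    · rw [h]; exact hbε
    · exact hQk.1
  · rintro ⟨N, hN⟩
    obtain ⟨ε, ⟨k, hk, -, -, hbig⟩, hle, h0, h1⟩ :=
      ((hp_freq N).and_eventually ((evSmall_iff_eventually.1 hN).and
        (Ioo_mem_nhdsGT one_pos))).exists
    have hpow : ε ^ (-(N : ℝ)) ≤ ε ^ (-(k : ℝ)) :=
      Real.rpow_le_rpow_of_exponent_ge h0 h1.le (by simp only [neg_le_neg_iff]; exact_mod_cast hk)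
    exact absurd hle (not_le.2 (hpow.trans_lt hbig))

theorem EMod_internal_sharplyBounded_general (d : ℕ)
    (A : Set (ℝ → EuclideanSpace ℝ (Fin d)))
    (Aε : ℝ → Set (EuclideanSpace ℝ (Fin d)))
    (hA : A = InternalSet Aε) (hne : A.Nonempty)
    (hbd : SharplyBddRep Aε)
    (u : ℝ → EuclideanSpace ℝ (Fin d) → ℂ) (hsm : SmoothNet u) :
    EMod A u ↔ ∀ n : ℕ, ∃ N : ℕ, EvSmall fun ε =>
      ∀ x ∈ Metric.cthickening (ε ^ (N : ℝ)) (Aε ε),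
        ‖iteratedFDeriv ℝ n (u ε) x‖ ≤ ε ^ (-(N : ℝ)) := by
  subst hA
  constructor
  · rintro ⟨-, hmod⟩ n
    by_contra hfail
    obtain ⟨-, b, -, hb⟩ := hne.some_mem
    obtain ⟨x, y, hxy, hy, hx⟩ := exists_eqvNet_not_moderate (evSmall_iff_eventually.1 hb) hfail
    exact hx (hmod n x ⟨(hbd.moderate hy).of_eqvNet hxy, y, hbd.mem_internalSet hy, hxy⟩)
  · intro hbound
    refine ⟨hsm, ?_⟩
    rintro n x ⟨-, a, ⟨-, y, hay, hy⟩, hxa⟩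
    obtain ⟨N, hN⟩ := hbound n
    refine ⟨N, evSmall_iff_eventually.2 ?_⟩
    filter_upwards [evSmall_iff_eventually.1 hN,
      (hxa.trans hay).eventually_mem_cthickening (evSmall_iff_eventually.1 hy) N] with ε hN hx
    exact hN _ hx

/-- Corollary 3.5: description of `E_M(A)` for an internal sharply bounded set. -/
theorem EMod_internal_sharplyBounded (d : ℕ)
    (A : Set (ℝ → EuclideanSpace ℝ (Fin d)))
    (Aε : ℝ → Set (EuclideanSpace ℝ (Fin d)))
    (hA : A = InternalSet Aε) (hne : A.Nonempty)
    (hbdA : SharplyBddSet A) (hbd : SharplyBddRep Aε)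
    (u : ℝ → EuclideanSpace ℝ (Fin d) → ℂ) (hsm : SmoothNet u) :
    EMod A u ↔ ∀ n : ℕ, ∃ N : ℕ, EvSmall fun ε =>
      ∀ x ∈ Metric.cthickening (ε ^ (N : ℝ)) (Aε ε),
        ‖iteratedFDeriv ℝ n (u ε) x‖ ≤ ε ^ (-(N : ℝ)) :=
  EMod_internal_sharplyBounded_general d A Aε hA hne hbd u hsm

end
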